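/- arXiv:math/0405433 — 3 statements merged into one kernel-verified Lean document; each statement's English description precedes it below -/
import Mathlib

section
/- (Simplex Lemma) Let N ≥ 1 be an integer and k > 1 a real number. Let E ⊆ ℝ^N be a convex set whose N-dimensional Lebesgue measure satisfies |E| ≤ (N!)⁻¹·k^{-(N+1)}. Suppose that E contains N+1 rational points (p_i^{(1)}/q_i, …, p_i^{(N)}/q_i), 0 ≤ i ≤ N, where each p_i^{(j)} ∈ ℤ and each q_i is an integer with 1 ≤ q_i < k. Then these N+1 rational points all lie in some affine hyperplane of ℝ^N. -/
open scoped ENNReal Nat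
open MeasureTheory Matrix Finset

/-!
If the points `xᵢ = pᵢ / qᵢ` are affinely independent, the integer matrix with rows `(qᵢ, pᵢ)`
has nonzero determinant, and this determinant equals `∏ qᵢ · det (xᵢ₊₁ - x₀)`; hence
`|det (xᵢ₊₁ - x₀)| ≥ (∏ qᵢ)⁻¹ > k^{-(N+1)}`. The convex hull of the points lies in `E` and has
volume at least `|det (xᵢ₊₁ - x₀)| / N!`, contradicting the bound on `|E|`. That the solid simplex
has volume at least `1 / N!` follows by covering the `ℓ¹` unit ball, of volume `2^N / N!`, with
`2^N` reflected copies of it.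
-/

lemma volume_image_add_mulVec {ι : Type*} [Fintype ι] [DecidableEq ι] (a : ι → ℝ)
    (M : Matrix ι ι ℝ) (s : Set (ι → ℝ)) :
    volume ((fun w => a + M *ᵥ w) '' s) = ENNReal.ofReal |M.det| * volume s := by
  rw [show (fun w => a + M *ᵥ w) = (a + ·) ∘ toLin' M from rfl, Set.image_comp,
    Set.image_add_left, measure_preimage_add, Measure.addHaar_image_linearMap,
    LinearMap.det_toLin']

def solidSimplex (ι : Type*) [Fintype ι] : Set (ι → ℝ) :=
  {w | (∀ i, 0 ≤ w i) ∧ ∑ i, w i ≤ 1}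

section SolidSimplex

variable {ι : Type*} [Fintype ι]

lemma volume_sum_abs_lt_one :
    volume {x : ι → ℝ | ∑ i, |x i| < 1} =
      ENNReal.ofReal (2 ^ Fintype.card ι / (Fintype.card ι)!) := by
  have h := volume_sum_rpow_lt_one ι (le_refl (1 : ℝ))
  simp only [Real.rpow_one, div_one] at h
  rw [h, ← Real.Gamma_nat_eq_factorial, one_add_one_eq_two, Real.Gamma_two, mul_one]

variable [DecidableEq ι]

def signFlip (s : Finset ι) : (ι → ℝ) →ₗ[ℝ] (ι → ℝ) :=
  toLin' (diagonal fun i => if i ∈ s then -1 else 1)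

lemma volume_image_signFlip (s : Finset ι) (A : Set (ι → ℝ)) :
    volume (signFlip s '' A) = volume A := by
  rw [signFlip, Measure.addHaar_image_linearMap, LinearMap.det_toLin', det_diagonal,
    Finset.abs_prod]
  simp [apply_ite]

lemma setOf_sum_abs_lt_one_subset_iUnion :
    {x : ι → ℝ | ∑ i, |x i| < 1} ⊆ ⋃ s : Finset ι, signFlip s '' solidSimplex ι := by
  intro x hx
  refine Set.mem_iUnion.mpr ⟨univ.filter fun i => x i < 0, fun i => |x i|,
    ⟨fun i => abs_nonneg _, hx.le⟩, ?_⟩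
  ext i
  by_cases hi : x i < 0 <;>
    simp [signFlip, mulVec_diagonal, hi, abs_of_neg, abs_of_nonneg, not_lt.mp]

lemma inv_factorial_le_volume_solidSimplex :
    ENNReal.ofReal ((Fintype.card ι)! : ℝ)⁻¹ ≤ volume (solidSimplex ι) := by
  have h2 : (2 : ℝ≥0∞) ^ Fintype.card ι ≠ 0 := pow_ne_zero _ two_ne_zero
  have h2' : (2 : ℝ≥0∞) ^ Fintype.card ι ≠ ⊤ := ENNReal.pow_ne_top ENNReal.ofNat_ne_top
  refine (ENNReal.mul_le_mul_iff_right h2 h2').mp ?_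
  calc 2 ^ Fintype.card ι * ENNReal.ofReal ((Fintype.card ι)! : ℝ)⁻¹
      = volume {x : ι → ℝ | ∑ i, |x i| < 1} := by
        rw [volume_sum_abs_lt_one, div_eq_mul_inv, ENNReal.ofReal_mul (by positivity)]
        norm_num
    _ ≤ ∑ s : Finset ι, volume (signFlip s '' solidSimplex ι) :=
        (measure_mono setOf_sum_abs_lt_one_subset_iUnion).trans (measure_iUnion_fintype_le _ _)
    _ = 2 ^ Fintype.card ι * volume (solidSimplex ι) := by
        simp only [volume_image_signFlip, sum_const, card_univ, Fintype.card_finset,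
          nsmul_eq_mul]
        norm_cast

end SolidSimplex

def edgeMatrix {R : Type*} [Ring R] {n : ℕ} (x : Fin (n + 1) → Fin n → R) :
    Matrix (Fin n) (Fin n) R :=
  Matrix.of fun i j => x i.succ j - x 0 j

lemma det_of_cons_one_eq_det_edgeMatrix {R : Type*} [CommRing R] {n : ℕ}
    (x : Fin (n + 1) → Fin n → R) :
    (Matrix.of fun i => (Fin.cons 1 (x i) : Fin (n + 1) → R)).det = (edgeMatrix x).det := by
  let D : Matrix (Fin (n + 1)) (Fin (n + 1)) R :=
    Matrix.of (Fin.cons (Fin.cons 1 (x 0)) fun i => Fin.cons 0 (x i.succ - x 0))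
  have hD : D.det = (edgeMatrix x).det := by
    rw [det_succ_column_zero, Fin.sum_univ_succ]
    simp only [D, of_apply, Fin.cons_zero, Fin.cons_succ, Fin.succAbove_zero, mul_zero,
      zero_mul, sum_const_zero, add_zero, Fin.val_zero, pow_zero, one_mul]
    rfl
  rw [← hD]
  refine det_eq_of_forall_row_eq_smul_add_const (Fin.cons 0 fun _ => 1) 0 rfl fun i j => ?_
  refine Fin.cases ?_ (fun i => ?_) i <;> refine Fin.cases ?_ (fun j => ?_) j <;> simp [D]

lemma det_of_cons_eq_prod_mul_det_edgeMatrix {K : Type*} [Field K] {n : ℕ}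
    (q : Fin (n + 1) → K) (y : Fin (n + 1) → Fin n → K) (hq : ∀ i, q i ≠ 0) :
    (Matrix.of fun i => (Fin.cons (q i) (y i) : Fin (n + 1) → K)).det =
      (∏ i, q i) * (edgeMatrix fun i j => y i j / q i).det := by
  rw [← det_of_cons_one_eq_det_edgeMatrix, ← det_mul_column]
  congr 1
  ext i j
  refine Fin.cases ?_ (fun j => ?_) j <;> simp [mul_div_cancel₀ _ (hq i)]

lemma one_le_abs_prod_mul_det_edgeMatrix {n : ℕ} (p : Fin (n + 1) → Fin n → ℤ)
    (q : Fin (n + 1) → ℤ) (hq : ∀ i, q i ≠ 0)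
    (h : (edgeMatrix fun i j => (p i j : ℝ) / q i).det ≠ 0) :
    1 ≤ |(∏ i, (q i : ℝ)) * (edgeMatrix fun i j => (p i j : ℝ) / q i).det| := by
  let B : Matrix (Fin (n + 1)) (Fin (n + 1)) ℤ := Matrix.of fun i => Fin.cons (q i) (p i)
  have hB : (B.det : ℝ) = (∏ i, (q i : ℝ)) * (edgeMatrix fun i j => (p i j : ℝ) / q i).det := by
    rw [Int.cast_det,
      ← det_of_cons_eq_prod_mul_det_edgeMatrix _ _ fun i => Int.cast_ne_zero.mpr (hq i)]
    congr 1
    ext i j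
    refine Fin.cases ?_ (fun j => ?_) j <;> simp [B]
  have hne : (∏ i, (q i : ℝ)) * (edgeMatrix fun i j => (p i j : ℝ) / q i).det ≠ 0 :=
    mul_ne_zero (prod_ne_zero_iff.mpr fun i _ => Int.cast_ne_zero.mpr (hq i)) h
  rw [← hB] at hne ⊢
  exact_mod_cast Int.one_le_abs (Int.cast_ne_zero.mp hne)

lemma exists_hyperplane_of_det_edgeMatrix_eq_zero {K : Type*} [Field K] {n : ℕ}
    (x : Fin (n + 1) → Fin n → K) (h : (edgeMatrix x).det = 0) :
    ∃ v : Fin n → K, ∃ t, v ≠ 0 ∧ ∀ i, ∑ j, v j * x i j = t := by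
  obtain ⟨v, hv, hMv⟩ := exists_mulVec_eq_zero_iff.mpr h
  refine ⟨v, ∑ j, v j * x 0 j, hv, fun i => Fin.cases rfl (fun i => ?_) i⟩
  have hi : (x i.succ - x 0) ⬝ᵥ v = 0 := congrFun hMv i
  rw [sub_dotProduct, sub_eq_zero, dotProduct_comm, dotProduct_comm (x 0)] at hi
  exact hi

section Simplex

variable {n : ℕ} (x : Fin (n + 1) → Fin n → ℝ)

lemma add_mulVec_transpose_edgeMatrix_mem_convexHull {w : Fin n → ℝ}
    (hw : w ∈ solidSimplex (Fin n)) :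
    x 0 + (edgeMatrix x)ᵀ *ᵥ w ∈ convexHull ℝ (Set.range x) := by
  obtain ⟨hw0, hw1⟩ := hw
  have hcomb : x 0 + (edgeMatrix x)ᵀ *ᵥ w =
      ∑ i, (Fin.cons (1 - ∑ j, w j) w : Fin (n + 1) → ℝ) i • x i := by
    have hrow : ∀ i, edgeMatrix x i = x i.succ - x 0 := fun i => rfl
    simp only [mulVec_transpose, vecMul_eq_sum, hrow, Fin.sum_univ_succ, Fin.cons_zero,
      Fin.cons_succ, smul_sub, sum_sub_distrib, ← sum_smul]
    module
  rw [hcomb]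
  refine (convex_convexHull ℝ _).sum_mem (fun i _ => ?_) ?_
    (fun i _ => subset_convexHull ℝ _ (Set.mem_range_self i))
  · exact Fin.cases (by simpa using hw1) (fun j => by simpa using hw0 j) i
  · simp [Fin.sum_univ_succ]

lemma ofReal_abs_det_edgeMatrix_div_le_volume_convexHull :
    ENNReal.ofReal (|(edgeMatrix x).det| / n !) ≤ volume (convexHull ℝ (Set.range x)) := by
  calc ENNReal.ofReal (|(edgeMatrix x).det| / n !)
      = ENNReal.ofReal |(edgeMatrix x).det| * ENNReal.ofReal (n ! : ℝ)⁻¹ := by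
        rw [div_eq_mul_inv, ENNReal.ofReal_mul (abs_nonneg _)]
    _ ≤ ENNReal.ofReal |(edgeMatrix x).det| * volume (solidSimplex (Fin n)) := by
        gcongr
        simpa using inv_factorial_le_volume_solidSimplex (ι := Fin n)
    _ = volume ((fun w => x 0 + (edgeMatrix x)ᵀ *ᵥ w) '' solidSimplex (Fin n)) := by
        rw [volume_image_add_mulVec, det_transpose]
    _ ≤ volume (convexHull ℝ (Set.range x)) := by
        gcongr
        rintro _ ⟨w, hw, rfl⟩
        exact add_mulVec_transpose_edgeMatrix_mem_convexHull x hw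

end Simplex

theorem simplex_lemma_general (N : ℕ) (k : ℝ)
    (E : Set (Fin N → ℝ)) (hconv : Convex ℝ E)
    (hvol : volume E ≤ ENNReal.ofReal (((N.factorial : ℝ) * k ^ (N + 1))⁻¹))
    (p : Fin (N + 1) → Fin N → ℤ) (q : Fin (N + 1) → ℤ)
    (hq : ∀ i, 1 ≤ q i ∧ (q i : ℝ) < k)
    (hmem : ∀ i, (fun j => (p i j : ℝ) / (q i : ℝ)) ∈ E) :
    ∃ (v : Fin N → ℝ) (t : ℝ), v ≠ 0 ∧
      ∀ i, ∑ j, v j * ((p i j : ℝ) / (q i : ℝ)) = t := by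
  set x : Fin (N + 1) → Fin N → ℝ := fun i j => (p i j : ℝ) / q i
  by_cases hdet : (edgeMatrix x).det = 0
  · exact exists_hyperplane_of_det_edgeMatrix_eq_zero x hdet
  exfalso
  have hpos (i) : (0 : ℝ) < q i := by exact_mod_cast (hq i).1
  have hk : 0 < k := (hpos 0).trans (hq 0).2
  have hprod : ∏ i, (q i : ℝ) < k ^ (N + 1) := by
    simpa using prod_lt_prod_of_nonempty (fun i _ => hpos i) (fun i _ => (hq i).2) univ_nonempty
  have hlower : 1 < k ^ (N + 1) * |(edgeMatrix x).det| :=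
    calc 1 ≤ |(∏ i, (q i : ℝ)) * (edgeMatrix x).det| :=
          one_le_abs_prod_mul_det_edgeMatrix p q (fun i => Int.cast_ne_zero.mp (hpos i).ne') hdet
      _ = (∏ i, (q i : ℝ)) * |(edgeMatrix x).det| := by
          rw [abs_mul, abs_of_pos (prod_pos fun i _ => hpos i)]
      _ < k ^ (N + 1) * |(edgeMatrix x).det| :=
          mul_lt_mul_of_pos_right hprod (abs_pos.mpr hdet)
  have hupper : |(edgeMatrix x).det| / N ! ≤ ((N ! : ℝ) * k ^ (N + 1))⁻¹ := by
    refine (ENNReal.ofReal_le_ofReal_iff (by positivity)).mp ?_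
    refine (ofReal_abs_det_edgeMatrix_div_le_volume_convexHull x).trans (le_trans ?_ hvol)
    exact measure_mono (hconv.convexHull_subset_iff.mpr (Set.range_subset_iff.mpr hmem))
  have hfac : (0 : ℝ) < N ! := by positivity
  rw [mul_inv, div_eq_mul_inv, mul_comm, mul_le_mul_iff_right₀ (inv_pos.mpr hfac), ← one_div,
    le_div_iff₀ (by positivity), mul_comm] at hupper
  linarith

/-- (Simplex Lemma) Let `N ≥ 1` be an integer and `k > 1` a real number.  Let `E ⊆ ℝ^N` be a
convex set whose `N`-dimensional Lebesgue measure satisfies `|E| ≤ (N!)⁻¹ k^{-(N+1)}`.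
Suppose that `E` contains the `N + 1` rational points `(pᵢ⁽¹⁾/qᵢ, …, pᵢ⁽ᴺ⁾/qᵢ)`,
`0 ≤ i ≤ N`, where each `pᵢ⁽ʲ⁾ ∈ ℤ` and each `qᵢ` is an integer with `1 ≤ qᵢ < k`.
Then these `N + 1` rational points all lie in some affine hyperplane of `ℝ^N`. -/
theorem simplex_lemma (N : ℕ) (hN : 1 ≤ N) (k : ℝ) (hk : 1 < k)
    (E : Set (Fin N → ℝ)) (hconv : Convex ℝ E)
    (hvol : volume E ≤ ENNReal.ofReal (((N.factorial : ℝ) * k ^ (N + 1))⁻¹))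
    (p : Fin (N + 1) → Fin N → ℤ) (q : Fin (N + 1) → ℤ)
    (hq : ∀ i, 1 ≤ q i ∧ (q i : ℝ) < k)
    (hmem : ∀ i, (fun j => (p i j : ℝ) / (q i : ℝ)) ∈ E) :
    ∃ (v : Fin N → ℝ) (t : ℝ), v ≠ 0 ∧
      ∀ i, ∑ j, v j * ((p i j : ℝ) / (q i : ℝ)) = t :=
  simplex_lemma_general N k E hconv hvol p q hq hmem
end

section
/- (Jarník) The set Bad of badly approximable real numbers, i.e. the set of x ∈ ℝ for which there exists c(x) > 0 such that |x − p/q| ≥ c(x)/q² for all rationals p/q (p ∈ ℤ, q ∈ ℕ, q ≥ 1), has Hausdorff dimension 1. -/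
/-- The distance from a real number to the nearest integer. -/
noncomputable def distToNearestInt (y : ℝ) : ℝ := |y - (round y : ℝ)|

/-!
The upper bound is `dimH ℝ = 1`. For the lower bound fix `M ≥ 2` and build a Cantor set of
badly approximable numbers in base `4M`: every level-`k` interval of length `(4M)^{-k}` is cut
into `4M` pieces, of which `M`, pairwise separated by at least one piece, are kept at distance
`≥ (4M)^{-(k+1)}` from every `p/q` with `2q² < (4M)^k`. Two such rationals are more than
`2 (4M)^{-k}` apart, so at most one of them threatens a given interval, and the kept pieces
are placed on either side of it.
Each `q` is handled at the level where `(4M)^{k-1} ≤ 2q² < (4M)^k`, which gives the constant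
`1 / (2 (4M)²)`. Reading the kept pieces as base-`M` digits maps the Cantor set onto `[0, 1]`,
and thanks to the gaps this map is Hölder of exponent `log M / log (4M)`, so that exponent bounds
`dimH Bad` from below; `M = 4ⁿ` gives `n / (n + 1) → 1`.
-/

open Set Real Filter Topology
open scoped NNReal ENNReal

theorem holderOnWith_of_dist_le {X Y : Type*} [PseudoMetricSpace X] [PseudoMetricSpace Y]
    {C r : ℝ≥0} {f : X → Y} {s : Set X}
    (h : ∀ x ∈ s, ∀ y ∈ s, dist (f x) (f y) ≤ C * dist x y ^ (r : ℝ)) :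
    HolderOnWith C r f s := by
  intro x hx y hy
  rw [edist_dist, edist_dist, ENNReal.ofReal_rpow_of_nonneg dist_nonneg r.coe_nonneg,
    ← ENNReal.ofReal_coe_nnreal, ← ENNReal.ofReal_mul C.coe_nonneg]
  exact ENNReal.ofReal_le_ofReal (h x hx y hy)

theorem le_dimH_of_holderOnWith {X : Type*} [EMetricSpace X] {s : Set X} {f : X → ℝ}
    {C r : ℝ≥0} (hf : HolderOnWith C r f s) (hr : 0 < r) (hint : (interior (f '' s)).Nonempty) :
    (r : ℝ≥0∞) ≤ dimH s := by
  have h : (1 : ℝ≥0∞) ≤ dimH s / r := by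
    calc (1 : ℝ≥0∞) = dimH (f '' s) := by simp [Real.dimH_of_nonempty_interior hint]
      _ ≤ dimH s / r := hf.dimH_image_le hr
  rwa [ENNReal.le_div_iff_mul_le (Or.inl (mod_cast hr.ne')) (Or.inl ENNReal.coe_ne_top),
    one_mul] at h

theorem one_div_mul_le_abs_div_sub_div {p p' : ℤ} {q q' : ℕ} (hq : 0 < q) (hq' : 0 < q')
    (hne : (p / q : ℝ) ≠ p' / q') : 1 / (q * q' : ℝ) ≤ |(p / q : ℝ) - p' / q'| := by
  have hq : (0 : ℝ) < q := mod_cast hq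
  have hq' : (0 : ℝ) < q' := mod_cast hq'
  have hnum : p * q' - p' * q ≠ 0 := by
    refine fun h => hne ?_
    rw [div_eq_div_iff hq.ne' hq'.ne']
    exact_mod_cast sub_eq_zero.mp h
  have hdiff : (p / q : ℝ) - p' / q' = ((p * q' - p' * q : ℤ) : ℝ) / (q * q') := by
    field_simp
    push_cast
    ring
  rw [hdiff, abs_div, abs_of_pos (mul_pos hq hq')]
  gcongr
  exact_mod_cast Int.one_le_abs hnum

theorem Real.logb_pow_succ_pow {b : ℝ} (hb : 1 < b) (n : ℕ) :
    logb (b ^ (n + 1)) (b ^ n) = n / (n + 1) := by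
  have : log b ≠ 0 := (log_pos hb).ne'
  rw [logb, log_pow, log_pow]
  push_cast
  field_simp

def badlyApproximable : Set ℝ :=
  {x : ℝ | ∃ c : ℝ, 0 < c ∧ ∀ (p : ℤ) (q : ℕ), 1 ≤ q →
      c / (q : ℝ) ^ 2 ≤ |x - (p : ℝ) / (q : ℝ)|}

namespace Jarnik

variable {M : ℕ}

-- The base is cast from `ℕ` as in `Real.ofDigitsTerm`, so `cantorLeftEnd_eq_sum` holds by `rfl`.
noncomputable def scale (M k : ℕ) : ℝ := (((4 * M : ℕ) : ℝ) ^ k)⁻¹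

lemma scale_pos (hM : 0 < M) (k : ℕ) : 0 < scale M k := by
  unfold scale
  positivity

lemma scale_nonneg (k : ℕ) : 0 ≤ scale M k := by
  unfold scale
  positivity

lemma scale_succ (k : ℕ) : scale M (k + 1) = scale M k / (4 * M) := by
  rw [scale, scale, pow_succ, mul_inv, div_eq_mul_inv]
  push_cast
  ring

lemma two_mul_scale_succ_le (hM : 0 < M) (k : ℕ) : 2 * scale M (k + 1) ≤ scale M k := by
  have hM' : (1 : ℝ) ≤ M := mod_cast hM
  rw [scale_succ, mul_div_assoc', div_le_iff₀ (by positivity)]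
  nlinarith [scale_pos hM k]

def smallDenomRats (M k : ℕ) : Set ℝ :=
  {r | ∃ (p : ℤ) (q : ℕ), 0 < q ∧ 2 * q ^ 2 < (4 * M) ^ k ∧ r = p / q}

lemma two_mul_scale_lt_abs_sub_of_mem_smallDenomRats {k : ℕ} {r r' : ℝ}
    (hr : r ∈ smallDenomRats M k) (hr' : r' ∈ smallDenomRats M k) (hne : r ≠ r') :
    2 * scale M k < |r - r'| := by
  obtain ⟨p, q, hq, hqk, rfl⟩ := hr
  obtain ⟨p', q', hq', hqk', rfl⟩ := hr'
  refine lt_of_lt_of_le ?_ (one_div_mul_le_abs_div_sub_div hq hq' hne)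
  have hqk : 2 * (q : ℝ) ^ 2 < ((4 * M : ℕ) : ℝ) ^ k := mod_cast hqk
  have hqk' : 2 * (q' : ℝ) ^ 2 < ((4 * M : ℕ) : ℝ) ^ k := mod_cast hqk'
  have hqq' : 2 * ((q : ℝ) * q') < ((4 * M : ℕ) : ℝ) ^ k := by
    nlinarith [sq_nonneg ((q : ℝ) - q')]
  have hqq'_pos : 0 < (q : ℝ) * q' := by positivity
  rw [scale, ← div_eq_mul_inv, div_lt_div_iff₀ (by linarith) hqq'_pos]
  linarith

def spoilers (M k : ℕ) (a : ℝ) : Set ℝ :=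
  smallDenomRats M k ∩ Ioo (a - scale M (k + 1)) (a + scale M k + scale M (k + 1))

lemma spoilers_subsingleton (hM : 0 < M) (k : ℕ) (a : ℝ) : (spoilers M k a).Subsingleton := by
  rintro r ⟨hr, hr_lo, hr_hi⟩ r' ⟨hr', hr'_lo, hr'_hi⟩
  by_contra hne
  have hfar := two_mul_scale_lt_abs_sub_of_mem_smallDenomRats hr hr' hne
  have hnear : |r - r'| < 2 * scale M k := abs_sub_lt_iff.mpr
    ⟨by linarith [two_mul_scale_succ_le hM k], by linarith [two_mul_scale_succ_le hM k]⟩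
  linarith

def subinterval (M k : ℕ) (a : ℝ) (c : ℕ) : Set ℝ :=
  Icc (a + c * scale M (k + 1)) (a + (c + 1) * scale M (k + 1))

lemma subinterval_subset_Icc {k c : ℕ} (hc : c < 4 * M) (a : ℝ) :
    subinterval M k a c ⊆ Icc a (a + scale M k) := by
  have hs := scale_nonneg (M := M) (k + 1)
  have hc : (c : ℝ) + 1 ≤ 4 * M := mod_cast hc
  have hM : (M : ℝ) ≠ 0 := Nat.cast_ne_zero.mpr (by omega)
  have hsk : scale M k = 4 * M * scale M (k + 1) := by
    rw [scale_succ]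
    field_simp
  rintro x ⟨hx_lo, hx_hi⟩
  constructor <;> nlinarith

lemma scale_succ_le_sub_of_mem_subinterval {k c c' : ℕ} {a x y : ℝ} (hcc' : c + 2 ≤ c')
    (hx : x ∈ subinterval M k a c) (hy : y ∈ subinterval M k a c') : scale M (k + 1) ≤ y - x := by
  have hcc' : (c : ℝ) + 2 ≤ c' := mod_cast hcc'
  have hs : 0 ≤ scale M (k + 1) := scale_nonneg _
  nlinarith [hx.2, hy.1]

-- Piece `2m` if it lies below the (unique) spoiler, else `2m + 3`: the kept pieces avoid it
-- and any two of them are at least one piece apart.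
open Classical in
noncomputable def childDigit (M k : ℕ) (a : ℝ) (m : Fin M) : Fin (4 * M) :=
  if ∃ r ∈ spoilers M k a, r < a + (2 * m + 2) * scale M (k + 1) then
    ⟨2 * m + 3, by omega⟩
  else ⟨2 * m, by omega⟩

lemma childDigit_add_two_le {k : ℕ} {a : ℝ} {m m' : Fin M} (hmm' : m < m') :
    (childDigit M k a m : ℕ) + 2 ≤ childDigit M k a m' := by
  have hs : 0 ≤ scale M (k + 1) := scale_nonneg _
  have hmm'' : (m : ℝ) ≤ m' := mod_cast hmm'.le
  unfold childDigit
  split_ifs with h h'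
  · dsimp only; omega
  · obtain ⟨r, hr, hr_lt⟩ := h
    exact absurd ⟨r, hr, hr_lt.trans_le (by gcongr)⟩ h'
  all_goals dsimp only; omega

lemma scale_succ_le_abs_sub_of_mem_subinterval_childDigit {k : ℕ} {a r x : ℝ} {m : Fin M}
    (hr : r ∈ smallDenomRats M k) (hx : x ∈ subinterval M k a (childDigit M k a m)) :
    scale M (k + 1) ≤ |x - r| := by
  have hM : 0 < M := m.pos
  have hs := scale_pos hM (k + 1)
  by_cases hspoil : r ∈ spoilers M k a
  · have hx_lo := hx.1
    have hx_hi := hx.2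
    unfold childDigit at hx_lo hx_hi
    split_ifs at hx_lo hx_hi with h
    · obtain ⟨r', hr', hr'_lt⟩ := h
      obtain rfl := spoilers_subsingleton hM k a hr' hspoil
      push_cast at hx_lo
      rw [abs_of_pos (by linarith)]
      linarith
    · simp only [not_exists, not_and, not_lt] at h
      have := h r hspoil
      push_cast at hx_hi
      rw [abs_sub_comm, abs_of_pos (by linarith)]
      linarith
  · have hx' := subinterval_subset_Icc (childDigit M k a m).isLt a hx
    simp only [spoilers, mem_inter_iff, mem_Ioo, not_and_or, not_lt] at hspoil
    rcases hspoil with hspoil | hspoil | hspoil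
    · exact absurd hr hspoil
    · rw [abs_of_nonneg (by linarith [hx'.1])]
      linarith [hx'.1]
    · rw [abs_sub_comm, abs_of_nonneg (by linarith [hx'.2])]
      linarith [hx'.2]


noncomputable def cantorLeftEnd (σ : ℕ → Fin M) : ℕ → ℝ
  | 0 => 0
  | k + 1 => cantorLeftEnd σ k + childDigit M k (cantorLeftEnd σ k) (σ k) * scale M (k + 1)

noncomputable def cantorDigit (σ : ℕ → Fin M) (k : ℕ) : Fin (4 * M) :=
  childDigit M k (cantorLeftEnd σ k) (σ k)

noncomputable def cantorPoint (σ : ℕ → Fin M) : ℝ := ofDigits (cantorDigit σ)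

def cantorSet (M : ℕ) : Set ℝ := range (cantorPoint (M := M))

lemma cantorLeftEnd_eq_sum (σ : ℕ → Fin M) (n : ℕ) :
    cantorLeftEnd σ n = ∑ i ∈ Finset.range n, ofDigitsTerm (cantorDigit σ) i := by
  induction n with
  | zero => rfl
  | succ n ih => rw [Finset.sum_range_succ, ← ih]; rfl

lemma cantorPoint_mem_Icc (σ : ℕ → Fin M) (n : ℕ) :
    cantorPoint σ ∈ Icc (cantorLeftEnd σ n) (cantorLeftEnd σ n + scale M n) := by
  rw [cantorPoint, ofDigits_eq_sum_add_ofDigits _ n, ← cantorLeftEnd_eq_sum]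
  have h0 := ofDigits_nonneg fun i => cantorDigit σ (i + n)
  have h1 := ofDigits_le_one fun i => cantorDigit σ (i + n)
  have hs : 0 ≤ scale M n := scale_nonneg _
  exact ⟨le_add_of_nonneg_right (mul_nonneg hs h0),
    (add_le_add_iff_left _).mpr (mul_le_of_le_one_right hs h1)⟩

lemma cantorPoint_mem_subinterval (σ : ℕ → Fin M) (k : ℕ) :
    cantorPoint σ ∈ subinterval M k (cantorLeftEnd σ k) (cantorDigit σ k) := by
  have h := cantorPoint_mem_Icc σ (k + 1)
  rw [cantorLeftEnd] at h
  rw [subinterval, cantorDigit]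
  constructor <;> linarith [h.1, h.2]

lemma cantorLeftEnd_congr {σ τ : ℕ → Fin M} {k : ℕ} (h : ∀ j < k, σ j = τ j) :
    cantorLeftEnd σ k = cantorLeftEnd τ k := by
  induction k with
  | zero => rfl
  | succ k ih =>
    rw [cantorLeftEnd, cantorLeftEnd, ih fun j hj => h j (by omega), h k (by omega)]

lemma scale_succ_le_abs_cantorPoint_sub {σ τ : ℕ → Fin M} {k : ℕ} (h : ∀ j < k, σ j = τ j)
    (hk : σ k ≠ τ k) : scale M (k + 1) ≤ |cantorPoint σ - cantorPoint τ| := by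
  have hσ := cantorPoint_mem_subinterval σ k
  have hτ := cantorPoint_mem_subinterval τ k
  rw [cantorDigit, cantorLeftEnd_congr h] at hσ
  rw [cantorDigit] at hτ
  rcases lt_or_gt_of_ne hk with hlt | hlt
  · rw [abs_sub_comm]
    exact (scale_succ_le_sub_of_mem_subinterval (childDigit_add_two_le hlt) hσ hτ).trans
      (le_abs_self _)
  · exact (scale_succ_le_sub_of_mem_subinterval (childDigit_add_two_le hlt) hτ hσ).trans
      (le_abs_self _)

lemma scale_succ_firstDiff_le_abs_cantorPoint_sub {σ τ : ℕ → Fin M} (hne : σ ≠ τ) :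
    scale M (PiNat.firstDiff σ τ + 1) ≤ |cantorPoint σ - cantorPoint τ| :=
  scale_succ_le_abs_cantorPoint_sub (fun _ => PiNat.apply_eq_of_lt_firstDiff)
    (PiNat.apply_firstDiff_ne hne)

lemma cantorPoint_injective : Function.Injective (cantorPoint (M := M)) := by
  intro σ τ h
  by_contra hne
  have := scale_succ_firstDiff_le_abs_cantorPoint_sub hne
  rw [h, sub_self, abs_zero] at this
  exact (scale_pos (σ 0).pos _).not_ge this

lemma cantorPoint_mem_badlyApproximable (σ : ℕ → Fin M) :
    cantorPoint σ ∈ badlyApproximable := by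
  have hM : 0 < M := (σ 0).pos
  refine ⟨(2 * (4 * M : ℝ) ^ 2)⁻¹, by positivity, fun p q hq => ?_⟩
  set j := Nat.log (4 * M) (2 * q ^ 2)
  have hj_le : (4 * M) ^ j ≤ 2 * q ^ 2 := Nat.pow_log_le_self _ (by positivity)
  have hj_lt : 2 * q ^ 2 < (4 * M) ^ (j + 1) := Nat.lt_pow_succ_log_self (by omega) _
  have hsmall : (p / q : ℝ) ∈ smallDenomRats M (j + 1) := ⟨p, q, hq, hj_lt, rfl⟩
  refine le_trans ?_ (scale_succ_le_abs_sub_of_mem_subinterval_childDigit hsmall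
    (cantorPoint_mem_subinterval σ (j + 1)))
  have hj_le : ((4 * M : ℕ) : ℝ) ^ j ≤ 2 * (q : ℝ) ^ 2 := mod_cast hj_le
  rw [scale, div_eq_mul_inv, ← mul_inv]
  gcongr
  calc ((4 * M : ℕ) : ℝ) ^ (j + 1 + 1) = ((4 * M : ℕ) : ℝ) ^ j * (4 * M : ℝ) ^ 2 := by
        push_cast; ring
    _ ≤ 2 * (q : ℝ) ^ 2 * (4 * M : ℝ) ^ 2 := by gcongr
    _ = _ := by ring

lemma cantorSet_subset_badlyApproximable : cantorSet M ⊆ badlyApproximable :=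
  range_subset_iff.mpr cantorPoint_mem_badlyApproximable

lemma scale_rpow_logb (hM : 0 < M) (k : ℕ) :
    scale M k ^ logb (4 * M : ℕ) M = ((M : ℝ) ^ k)⁻¹ := by
  have hb : (1 : ℝ) < (4 * M : ℕ) := mod_cast (by omega : 1 < 4 * M)
  have hb0 : (0 : ℝ) ≤ (4 * M : ℕ) := by positivity
  rw [scale, Real.inv_rpow (by positivity), ← Real.rpow_natCast, ← Real.rpow_mul hb0,
    mul_comm (k : ℝ), Real.rpow_mul hb0, Real.rpow_logb (by linarith) hb.ne' (mod_cast hM),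
    Real.rpow_natCast]

noncomputable def digitValue (M : ℕ) : ℝ → ℝ :=
  Function.extend (cantorPoint (M := M)) ofDigits 0

lemma digitValue_cantorPoint (σ : ℕ → Fin M) : digitValue M (cantorPoint σ) = ofDigits σ :=
  cantorPoint_injective.extend_apply _ _ σ

lemma holderOnWith_digitValue :
    HolderOnWith M (logb (4 * M : ℕ) M).toNNReal (digitValue M) (cantorSet M) := by
  apply holderOnWith_of_dist_le
  rintro _ ⟨σ, rfl⟩ _ ⟨τ, rfl⟩
  have hM : 0 < M := (σ 0).pos
  have hα : 0 ≤ logb (4 * M : ℕ) M :=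
    Real.logb_nonneg (mod_cast (by omega : 1 < 4 * M)) (mod_cast hM)
  rw [digitValue_cantorPoint, digitValue_cantorPoint, NNReal.coe_natCast,
    Real.coe_toNNReal _ hα]
  rcases eq_or_ne σ τ with rfl | hne
  · rw [dist_self]
    positivity
  set k := PiNat.firstDiff σ τ
  calc dist (ofDigits σ) (ofDigits τ) ≤ ((M : ℝ) ^ k)⁻¹ :=
        abs_ofDigits_sub_ofDigits_le fun _ => PiNat.apply_eq_of_lt_firstDiff
    _ = M * scale M (k + 1) ^ logb (4 * M : ℕ) M := by
        have : (M : ℝ) ≠ 0 := mod_cast hM.ne'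
        rw [scale_rpow_logb hM, pow_succ]
        field_simp
    _ ≤ M * dist (cantorPoint σ) (cantorPoint τ) ^ logb (4 * M : ℕ) M := by
        gcongr
        · exact (scale_pos hM _).le
        · exact scale_succ_firstDiff_le_abs_cantorPoint_sub hne

theorem ofReal_logb_le_dimH_badlyApproximable (hM : 1 < M) :
    ENNReal.ofReal (logb (4 * M : ℕ) M) ≤ dimH badlyApproximable := by
  have hpos : 0 < logb (4 * M : ℕ) M :=
    Real.logb_pos (mod_cast (by omega : 1 < 4 * M)) (mod_cast hM)
  have himage : digitValue M '' cantorSet M = range (ofDigits (b := M)) := by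
    rw [cantorSet, ← range_comp]
    exact congrArg range (funext digitValue_cantorPoint)
  have hint : (interior (digitValue M '' cantorSet M)).Nonempty := by
    rw [himage, ← image_univ]
    refine ⟨1 / 2, interior_mono (ofDigits_SurjOn hM) ?_⟩
    rw [interior_Icc]
    norm_num
  calc ENNReal.ofReal (logb (4 * M : ℕ) M) = ((logb (4 * M : ℕ) M).toNNReal : ℝ≥0∞) := rfl
    _ ≤ dimH (cantorSet M) :=
        le_dimH_of_holderOnWith holderOnWith_digitValue (Real.toNNReal_pos.mpr hpos) hint
    _ ≤ dimH badlyApproximable := dimH_mono cantorSet_subset_badlyApproximable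

end Jarnik

/-- (Jarník) The set of badly approximable real numbers, i.e. the set of `x : ℝ` for which
there exists `c > 0` such that `|x - p/q| ≥ c / q ^ 2` for all rationals `p / q` with `p : ℤ`,
`q : ℕ`, `q ≥ 1`, has Hausdorff dimension `1`. -/
theorem jarnik_dimH_bad_eq_one :
    dimH {x : ℝ | ∃ c : ℝ, 0 < c ∧ ∀ (p : ℤ) (q : ℕ), 1 ≤ q →
      c / (q : ℝ) ^ 2 ≤ |x - (p : ℝ) / (q : ℝ)|} = 1 := by
  change dimH badlyApproximable = 1
  refine le_antisymm ((dimH_mono (subset_univ _)).trans Real.dimH_univ.le) ?_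
  have hlim : Tendsto (fun n : ℕ => ENNReal.ofReal (n / (n + 1))) atTop (𝓝 1) := by
    simpa using ENNReal.tendsto_ofReal (tendsto_natCast_div_add_atTop (1 : ℝ))
  refine le_of_tendsto hlim (eventually_atTop.mpr ⟨1, fun n hn => ?_⟩)
  have h := Jarnik.ofReal_logb_le_dimH_badlyApproximable
    (Nat.one_lt_pow (by omega) (by norm_num) : 1 < 4 ^ n)
  rwa [Nat.cast_mul, Nat.cast_pow, Nat.cast_ofNat, ← pow_succ',
    Real.logb_pow_succ_pow (by norm_num)] at h
end

section
/- Suppose there exist pairs (i,j) and (i',j') with i, j, i', j' ≥ 0, i + j = 1 and i' + j' = 1, such that Bad(i,j) ∩ Bad(i',j') = ∅ (i.e. Schmidt's conjecture fails for these pairs). Then Littlewood's conjecture holds: for every (x,y) ∈ ℝ², liminf_{q→∞} q·‖qx‖·‖qy‖ = 0, where q ranges over positive integers. -/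
open scoped ENNReal

/-- For weights `i, j ≥ 0` with `i + j = 1`, the set `Bad(i,j)` of pairs
`(x₁, x₂) ∈ ℝ²` for which there exists `c > 0` such that for every integer `q ≥ 1` one has
`max{‖q x₁‖^(1/i), ‖q x₂‖^(1/j)} > c / q`, the maximum being taken over the components with
positive weight (a component with weight `0` imposes no condition). -/
def badPair (i j : ℝ) : Set (Fin 2 → ℝ) :=
  {x | ∃ c : ℝ, 0 < c ∧ ∀ q : ℕ, 0 < q →
    (0 < i ∧ c / (q : ℝ) < distToNearestInt ((q : ℝ) * x 0) ^ (1 / i)) ∨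
    (0 < j ∧ c / (q : ℝ) < distToNearestInt ((q : ℝ) * x 1) ^ (1 / j))}

lemma distToNearestInt_nonneg (r : ℝ) : 0 ≤ distToNearestInt r := abs_nonneg _

lemma distToNearestInt_le_one (r : ℝ) : distToNearestInt r ≤ 1 :=
  le_trans (abs_sub_round r) (by norm_num)

/-- If neither coordinate is "rational for q" and Littlewood fails eventually,
then the pair is in `badPair i j`. -/
lemma mem_badPair_of_not_littlewood (i j : ℝ) (hi : 0 ≤ i) (hj : 0 ≤ j) (hij : i + j = 1)
    (x y : ℝ)
    (hx : ∀ q : ℕ, 0 < q → distToNearestInt ((q : ℝ) * x) ≠ 0)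
    (hy : ∀ q : ℕ, 0 < q → distToNearestInt ((q : ℝ) * y) ≠ 0)
    (ε : ℝ) (hε : 0 < ε) (N : ℕ)
    (hN : ∀ q : ℕ, q ≥ N →
      ε ≤ (q : ℝ) * distToNearestInt ((q : ℝ) * x) * distToNearestInt ((q : ℝ) * y)) :
    ![x, y] ∈ badPair i j := by
  have ha : ∀ q : ℕ, 0 < q → 0 < distToNearestInt ((q : ℝ) * x) :=
    fun q hq => lt_of_le_of_ne (distToNearestInt_nonneg _) (Ne.symm (hx q hq))
  have hb : ∀ q : ℕ, 0 < q → 0 < distToNearestInt ((q : ℝ) * y) :=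
    fun q hq => lt_of_le_of_ne (distToNearestInt_nonneg _) (Ne.symm (hy q hq))
  set g : ℕ → ℝ := fun q =>
    (q : ℝ) * min (distToNearestInt ((q : ℝ) * x) ^ (1 / i))
      (distToNearestInt ((q : ℝ) * y) ^ (1 / j)) / 2 with hg
  have hne : (Finset.Icc 1 (N + 1)).Nonempty := ⟨1, by simp⟩
  have hgpos : ∀ q ∈ Finset.Icc 1 (N + 1), 0 < g q := by
    intro q hqmem
    rw [Finset.mem_Icc] at hqmem
    have hq : 0 < q := hqmem.1
    have hq' : (0 : ℝ) < q := Nat.cast_pos.mpr hq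
    have hA := Real.rpow_pos_of_pos (ha q hq) (1 / i)
    have hB := Real.rpow_pos_of_pos (hb q hq) (1 / j)
    exact div_pos (mul_pos hq' (lt_min hA hB)) two_pos
  set c := min (ε / 2) ((Finset.Icc 1 (N + 1)).inf' hne g) with hcdef
  have hc : 0 < c := lt_min (by linarith) ((Finset.lt_inf'_iff hne).mpr hgpos)
  refine ⟨c, hc, ?_⟩
  intro q hq
  have hq' : (0 : ℝ) < q := Nat.cast_pos.mpr hq
  simp only [Matrix.cons_val_zero, Matrix.cons_val_one, Matrix.head_cons]
  set a := distToNearestInt ((q : ℝ) * x) with hadef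
  set b := distToNearestInt ((q : ℝ) * y) with hbdef
  have hapos : 0 < a := ha q hq
  have hbpos : 0 < b := hb q hq
  have hA := Real.rpow_pos_of_pos hapos (1 / i)
  have hB := Real.rpow_pos_of_pos hbpos (1 / j)
  rcases le_or_gt q (N + 1) with hsmall | hlarge
  · have hmem : q ∈ Finset.Icc 1 (N + 1) := Finset.mem_Icc.mpr ⟨hq, hsmall⟩
    have hcg : c ≤ g q := le_trans (min_le_right _ _) (Finset.inf'_le g hmem)
    have hm : 0 < min (a ^ (1 / i)) (b ^ (1 / j)) := lt_min hA hB
    have hgq : g q = (q : ℝ) * min (a ^ (1 / i)) (b ^ (1 / j)) / 2 := rfl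
    have hlt : c / q < min (a ^ (1 / i)) (b ^ (1 / j)) := by
      rw [div_lt_iff₀ hq']
      rw [hgq] at hcg
      nlinarith [mul_pos hm hq']
    have hor : 0 < i ∨ 0 < j := by
      by_contra h
      push_neg at h
      linarith
    rcases hor with h | h
    · exact Or.inl ⟨h, lt_of_lt_of_le hlt (min_le_left _ _)⟩
    · exact Or.inr ⟨h, lt_of_lt_of_le hlt (min_le_right _ _)⟩
  · have hNq : q ≥ N := by omega
    have hεq := hN q hNq
    rw [← hadef, ← hbdef] at hεq
    have ha1 : a ≤ 1 := distToNearestInt_le_one _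
    have hb1 : b ≤ 1 := distToNearestInt_le_one _
    have hcε : c ≤ ε / 2 := min_le_left _ _
    rcases eq_or_lt_of_le hi with hi0 | hipos
    · -- i = 0, hence j = 1
      have hj1 : j = 1 := by linarith
      refine Or.inr ⟨by rw [hj1]; norm_num, ?_⟩
      rw [hj1]
      norm_num
      rw [div_lt_iff₀ hq']
      nlinarith
    · rcases eq_or_lt_of_le hj with hj0 | hjpos
      · have hi1 : i = 1 := by linarith
        refine Or.inl ⟨by rw [hi1]; norm_num, ?_⟩
        rw [hi1]
        norm_num
        rw [div_lt_iff₀ hq']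
        nlinarith
      · set m := max (a ^ (1 / i)) (b ^ (1 / j)) with hmdef
        have hm : 0 < m := lt_of_lt_of_le hA (le_max_left _ _)
        have hai : a ≤ m ^ i := by
          have h1 : (a ^ (1 / i)) ^ i = a := by
            rw [← Real.rpow_mul hapos.le, one_div_mul_cancel (ne_of_gt hipos), Real.rpow_one]
          have h2 : (a ^ (1 / i)) ^ i ≤ m ^ i :=
            Real.rpow_le_rpow hA.le (le_max_left _ _) hi
          rwa [h1] at h2
        have hbj : b ≤ m ^ j := by
          have h1 : (b ^ (1 / j)) ^ j = b := by
            rw [← Real.rpow_mul hbpos.le, one_div_mul_cancel (ne_of_gt hjpos), Real.rpow_one]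
          have h2 : (b ^ (1 / j)) ^ j ≤ m ^ j :=
            Real.rpow_le_rpow hB.le (le_max_right _ _) hj
          rwa [h1] at h2
        have hmm : m ^ i * m ^ j = m := by
          rw [← Real.rpow_add hm, hij, Real.rpow_one]
        have hab : a * b ≤ m ^ i * m ^ j :=
          mul_le_mul hai hbj hbpos.le (Real.rpow_nonneg hm.le i)
        have hqm : ε ≤ (q : ℝ) * m := by
          calc ε ≤ (q : ℝ) * a * b := hεq
            _ = (q : ℝ) * (a * b) := by ring
            _ ≤ (q : ℝ) * (m ^ i * m ^ j) := mul_le_mul_of_nonneg_left hab hq'.le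
            _ = (q : ℝ) * m := by rw [hmm]
        have hlt : c / q < m := by
          rw [div_lt_iff₀ hq']
          nlinarith
        rcases max_choice (a ^ (1 / i)) (b ^ (1 / j)) with hmax | hmax
        · exact Or.inl ⟨hipos, lt_of_lt_of_le hlt (le_of_eq hmax)⟩
        · exact Or.inr ⟨hjpos, lt_of_lt_of_le hlt (le_of_eq hmax)⟩

/-- If some positive multiple of `x` has zero distance to the integers, the Littlewood
product is frequently (in fact, along multiples) zero. -/
lemma freq_zero (x y : ℝ) (ε : ℝ) (hε : 0 < ε) (q0 : ℕ) (hq0 : 0 < q0)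
    (h : distToNearestInt ((q0 : ℝ) * x) = 0) :
    ∃ᶠ q : ℕ in Filter.atTop,
      (q : ℝ) * distToNearestInt ((q : ℝ) * x) * distToNearestInt ((q : ℝ) * y) < ε := by
  rw [Filter.frequently_atTop]
  intro N
  refine ⟨q0 * max N 1, ?_, ?_⟩
  · calc N ≤ max N 1 := le_max_left _ _
      _ = 1 * max N 1 := (one_mul _).symm
      _ ≤ q0 * max N 1 := Nat.mul_le_mul_right _ hq0
  · simp only [distToNearestInt, abs_eq_zero, sub_eq_zero] at h
    have key : ((q0 * max N 1 : ℕ) : ℝ) * x =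
        ((((max N 1 : ℕ) : ℤ) * round ((q0 : ℝ) * x) : ℤ) : ℝ) := by
      rw [Nat.cast_mul, mul_comm ((q0 : ℕ) : ℝ) (((max N 1 : ℕ)) : ℝ), mul_assoc, h]
      push_cast
      rw [round_intCast]
    have hz : distToNearestInt (((q0 * max N 1 : ℕ) : ℝ) * x) = 0 := by
      rw [distToNearestInt, key, round_intCast, sub_self, abs_zero]
    rw [hz, mul_zero, zero_mul]
    exact hε

/-- If Schmidt's conjecture fails for some pairs of weights `(i,j)` and `(i',j')`, i.e.
`Bad(i,j) ∩ Bad(i',j') = ∅`, then Littlewood's conjecture holds: for every `(x,y) ∈ ℝ²`,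
`liminf_{q → ∞} q ‖q x‖ ‖q y‖ = 0` (expressed as: for every `ε > 0`, frequently in `q`,
`q ‖q x‖ ‖q y‖ < ε`). -/
theorem littlewood_of_schmidt_fails (i j i' j' : ℝ) (hi : 0 ≤ i) (hj : 0 ≤ j)
    (hij : i + j = 1) (hi' : 0 ≤ i') (hj' : 0 ≤ j') (hij' : i' + j' = 1)
    (hempty : badPair i j ∩ badPair i' j' = ∅) :
    ∀ x y : ℝ, ∀ ε : ℝ, 0 < ε → ∃ᶠ q : ℕ in Filter.atTop,
      (q : ℝ) * distToNearestInt ((q : ℝ) * x) * distToNearestInt ((q : ℝ) * y) < ε := by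
  intro x y ε hε
  by_cases hx : ∀ q : ℕ, 0 < q → distToNearestInt ((q : ℝ) * x) ≠ 0
  · by_cases hy : ∀ q : ℕ, 0 < q → distToNearestInt ((q : ℝ) * y) ≠ 0
    · by_contra hcon
      rw [Filter.not_frequently] at hcon
      simp only [not_lt] at hcon
      obtain ⟨N, hN⟩ := Filter.eventually_atTop.mp hcon
      have h1 := mem_badPair_of_not_littlewood i j hi hj hij x y hx hy ε hε N hN
      have h2 := mem_badPair_of_not_littlewood i' j' hi' hj' hij' x y hx hy ε hε N hN
      have hmem : ![x, y] ∈ badPair i j ∩ badPair i' j' := ⟨h1, h2⟩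
      rw [hempty] at hmem
      exact hmem
    · push_neg at hy
      obtain ⟨q0, hq0, h0⟩ := hy
      have := freq_zero y x ε hε q0 hq0 h0
      exact this.mono (fun q hq => by rw [mul_right_comm] at hq; exact hq)
  · push_neg at hx
    obtain ⟨q0, hq0, h0⟩ := hx
    exact freq_zero x y ε hε q0 hq0 h0
end
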